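/- Let W be a well-generated irreducible unitary reflection group and ν any ℤ-valued multiplicity on 𝒜 = 𝒜(W). For each H choose a_H ∈ ℤ and set μ(H) = a_H·e_H + 1; if μ − ω < ν ≤ μ (pointwise), then D(𝒜, ν)^W = D(𝒜, μ)^W. -/

import Mathlib

open MvPolynomial

set_option synthInstance.maxHeartbeats 1000000
set_option maxHeartbeats 1000000

noncomputable section

/-- The polynomial ring `S = ℂ[x_1, …, x_ℓ]`. -/
abbrev Spoly (ℓ : ℕ) := MvPolynomial (Fin ℓ) ℂ

/-- The field `F = ℂ(x_1, …, x_ℓ)` of rational functions. -/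
abbrev Frac (ℓ : ℕ) := FractionRing (Spoly ℓ)

/-- The canonical embedding `S → F`. -/
def toF {ℓ : ℕ} : Spoly ℓ →+* Frac ℓ := algebraMap _ _

/-- The linear form with coefficient vector `a`. -/
def lin {ℓ : ℕ} (a : Fin ℓ → ℂ) : Spoly ℓ := ∑ i, C (a i) * X i

/-- Orthogonality of coefficient vectors with respect to the (standard) Hermitian form. -/
def orth {ℓ : ℕ} (a b : Fin ℓ → ℂ) : Prop := ∑ i, (starRingEnd ℂ) (a i) * b i = 0

/-- The localization `S_{⟨α⟩}` of `S` at the prime ideal `⟨α⟩`, as a subset of `F`. -/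
def locAt {ℓ : ℕ} (α : Spoly ℓ) : Set (Frac ℓ) :=
  {x | ∃ f g : Spoly ℓ, g ∉ Ideal.span ({α} : Set (Spoly ℓ)) ∧ toF g * x = toF f}

/-- The ring `S' = S[Q_𝒜^{-1}]`, as a subset of `F`. -/
def Sloc {ℓ : ℕ} (A : Finset (Fin ℓ → ℂ)) : Set (Frac ℓ) :=
  {x | ∃ (f : Spoly ℓ) (n : ℕ), toF (∏ a ∈ A, lin a) ^ n * x = toF f}

/-- The module `D(𝒜, -∞)` of logarithmic vector fields on the arrangement with
defining linear forms `lin a` for `a ∈ A`: derivations of `S' = S[Q_𝒜^{-1}]` with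
`θ(β) ∈ S_{⟨α_H⟩}` for all `β` orthogonal to `α_H`. -/
def Dinf {ℓ : ℕ} (A : Finset (Fin ℓ → ℂ)) (θ : Derivation ℂ (Frac ℓ) (Frac ℓ)) : Prop :=
  (∀ i, θ (toF (X i)) ∈ Sloc A) ∧
  ∀ a ∈ A, ∀ b : Fin ℓ → ℂ, orth a b → θ (toF (lin b)) ∈ locAt (lin a)

/-- The module `D(𝒜, ν)` of `(𝒜,ν)`-derivations for a ℤ-valued multiplicity `ν`:
logarithmic vector fields with `θ(α_H) ∈ α_H^{ν(H)}·S_{⟨α_H⟩}` for every `H ∈ 𝒜`. -/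
def Dmult {ℓ : ℕ} (A : Finset (Fin ℓ → ℂ)) (ν : (Fin ℓ → ℂ) → ℤ)
    (θ : Derivation ℂ (Frac ℓ) (Frac ℓ)) : Prop :=
  Dinf A θ ∧ ∀ a ∈ A, ∃ y ∈ locAt (lin a), θ (toF (lin a)) = toF (lin a) ^ ν a * y

/-- `A` is a central arrangement: all linear forms nonzero and pairwise
non-proportional (distinct hyperplanes). -/
def IsArrangement {ℓ : ℕ} (A : Finset (Fin ℓ → ℂ)) : Prop :=
  (∀ a ∈ A, a ≠ 0) ∧ ∀ a ∈ A, ∀ b ∈ A, (∃ c : ℂ, b = c • a) → a = b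

/-- `θ` is a polynomial derivation, i.e. `θ ∈ Der(S)`. -/
def PolyDer {ℓ : ℕ} (θ : Derivation ℂ (Frac ℓ) (Frac ℓ)) : Prop :=
  ∀ i, ∃ f : Spoly ℓ, θ (toF (X i)) = toF f

/-- `θ_1, …, θ_ℓ` is an `S`-basis of `D(𝒜, ν)`. -/
def IsBasisOfD {ℓ : ℕ} (A : Finset (Fin ℓ → ℂ)) (ν : (Fin ℓ → ℂ) → ℤ)
    (θs : Fin ℓ → Derivation ℂ (Frac ℓ) (Frac ℓ)) : Prop :=
  (∀ i, Dmult A ν (θs i)) ∧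
  ∀ θ, Dmult A ν θ → ∃! c : Fin ℓ → Spoly ℓ, θ = ∑ i, toF (c i) • θs i

/-- `θ` is homogeneous of polynomial degree `d`: `θ = Σ (f_i/g_i) ∂_{x_i}` with
all `f_i` homogeneous of degree `p`, all `g_i ≠ 0` homogeneous of degree `q`, and `d = p - q`. -/
def IsHomogDer {ℓ : ℕ} (θ : Derivation ℂ (Frac ℓ) (Frac ℓ)) (d : ℤ) : Prop :=
  ∃ (p q : ℕ) (f g : Fin ℓ → Spoly ℓ), d = (p : ℤ) - (q : ℤ) ∧
    ∀ i, f i ∈ homogeneousSubmodule (Fin ℓ) ℂ p ∧ g i ∈ homogeneousSubmodule (Fin ℓ) ℂ q ∧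
      g i ≠ 0 ∧ toF (g i) * θ (toF (X i)) = toF (f i)

/-- The defining rational function `Q(𝒜, ν) = ∏_H α_H^{ν(H)}`. -/
def Qrat {ℓ : ℕ} (A : Finset (Fin ℓ → ℂ)) (ν : (Fin ℓ → ℂ) → ℤ) : Frac ℓ :=
  ∏ a ∈ A, toF (lin a) ^ ν a

/-- The group of linear automorphisms of `V = ℂ^ℓ`. -/
abbrev GLV (ℓ : ℕ) := (Fin ℓ → ℂ) ≃ₗ[ℂ] (Fin ℓ → ℂ)

/-- The hyperplane `ker` of the linear form with coefficient vector `a`. -/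
def hypl {ℓ : ℕ} (a : Fin ℓ → ℂ) : Set (Fin ℓ → ℂ) := {v | ∑ i, a i * v i = 0}

/-- `w` is a (unitary) reflection: `w ≠ 1` and its fixed space is a hyperplane. -/
def IsReflection {ℓ : ℕ} (w : GLV ℓ) : Prop :=
  w ≠ 1 ∧ ∃ a : Fin ℓ → ℂ, a ≠ 0 ∧ {v | w v = v} = hypl a

/-- The algebra automorphism of `S = Sym(V^*)` induced by a linear automorphism of `V`
(substitution `p ↦ p ∘ s`). -/
def induced {ℓ : ℕ} (s : GLV ℓ) : Spoly ℓ →ₐ[ℂ] Spoly ℓ :=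
  MvPolynomial.aeval (fun i => ∑ j, C (s (Pi.single j 1) i) * X j)

/-- The order `e_H` of the pointwise stabilizer in `G` of the hyperplane with
coefficient vector `a`. -/
def hypOrder {ℓ : ℕ} (G : Subgroup (GLV ℓ)) (a : Fin ℓ → ℂ) : ℕ :=
  Nat.card {w : G | ∀ v ∈ hypl a, (w : GLV ℓ) v = v}

/-- `A` is the reflection arrangement of the group `G`. -/
def IsReflArrOf {ℓ : ℕ} (G : Subgroup (GLV ℓ)) (A : Finset (Fin ℓ → ℂ)) : Prop :=
  IsArrangement A ∧
  (∀ w ∈ G, IsReflection w → ∃ a ∈ A, {v | w v = v} = hypl a) ∧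
  (∀ a ∈ A, ∃ w ∈ G, IsReflection w ∧ {v | w v = v} = hypl a)

/-- `G` is generated by `ℓ` reflections (well-generated). -/
def WellGen {ℓ : ℕ} (G : Subgroup (GLV ℓ)) : Prop :=
  ∃ s : Finset (GLV ℓ), s.card = ℓ ∧ (∀ w ∈ s, w ∈ G ∧ IsReflection w) ∧
    Subgroup.closure (s : Set (GLV ℓ)) = G

/-- `G` acts irreducibly on `V`. -/
def IsIrred {ℓ : ℕ} (G : Subgroup (GLV ℓ)) : Prop :=
  ∀ U : Submodule ℂ (Fin ℓ → ℂ), (∀ w ∈ G, ∀ v ∈ U, (w : GLV ℓ) v ∈ U) → U = ⊥ ∨ U = ⊤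

/-- `θ` is a `G`-invariant derivation: `θ` commutes with the induced action of
every `w ∈ G` on rational functions (expressed via representatives in `S`). -/
def Winvariant {ℓ : ℕ} (G : Subgroup (GLV ℓ)) (θ : Derivation ℂ (Frac ℓ) (Frac ℓ)) : Prop :=
  ∀ w ∈ G, ∀ p f g : Spoly ℓ, g ≠ 0 → toF g * θ (toF p) = toF f →
    toF (induced w g) * θ (toF (induced w p)) = toF (induced w f)

/-!
Write `θ(α_H) = α_H^n · f/g` with `α_H ∤ f g`. An element `w` of the pointwise stabilizer of `H`
scales `α_H` by some `c` and acts trivially modulo `α_H`, so `W`-invariance of `θ` forces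
`c = c^n`. The eigenvalue `w ↦ c` is a faithful character of the stabilizer, which is therefore
cyclic of order `e_H`; hence `e_H ∣ n - 1`. Since `μ(H) ≡ 1 (mod e_H)` and
`n ≥ ν(H) > μ(H) - e_H`, this forces `n ≥ μ(H)`.
-/

open Matrix

section

variable {ℓ : ℕ}

lemma mem_hypl {a v : Fin ℓ → ℂ} : v ∈ hypl a ↔ a ⬝ᵥ v = 0 := Iff.rfl

lemma eval_lin (a v : Fin ℓ → ℂ) : eval v (lin a) = a ⬝ᵥ v := by
  simp [lin, dotProduct]

lemma coeff_lin (a : Fin ℓ → ℂ) (k : Fin ℓ) : coeff (Finsupp.single k 1) (lin a) = a k := by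
  simp [lin, coeff_sum, coeff_C_mul, coeff_X, Finsupp.single_eq_single_iff]

lemma isHomogeneous_lin (a : Fin ℓ → ℂ) : (lin a).IsHomogeneous 1 :=
  IsHomogeneous.sum _ _ _ fun i _ => (isHomogeneous_X ℂ i).C_mul (a i)

lemma lin_ne_zero {a : Fin ℓ → ℂ} (ha : a ≠ 0) : lin a ≠ 0 := by
  obtain ⟨k, hk⟩ := Function.ne_iff.mp ha
  intro h
  simp [← coeff_lin, h] at hk

lemma prime_lin {a : Fin ℓ → ℂ} (ha : a ≠ 0) : Prime (lin a) := by
  obtain ⟨k, hk⟩ := Function.ne_iff.mp ha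
  refine (irreducible_of_totalDegree_eq_one ((isHomogeneous_lin a).totalDegree (lin_ne_zero ha))
    fun x hx => isUnit_iff_ne_zero.mpr ?_).prime
  rintro rfl
  exact hk (zero_dvd_iff.mp (coeff_lin a k ▸ hx _))

lemma eval_induced (w : GLV ℓ) (v : Fin ℓ → ℂ) (p : Spoly ℓ) :
    eval v (induced w p) = eval (w v) p := by
  have : (aeval v).comp (induced w) = aeval (w v) := by
    ext i
    have := congrFun (LinearMap.toMatrix'_mulVec w.toLinearMap v) i
    simp only [mulVec, dotProduct, LinearMap.toMatrix'_apply] at this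
    simpa [induced, mul_comm] using this
  simpa [coe_aeval_eq_eval] using congr($this p)

lemma exists_eq_mul_dotProduct_of_hypl {a : Fin ℓ → ℂ} (φ : Module.Dual ℂ (Fin ℓ → ℂ))
    (hφ : ∀ v ∈ hypl a, φ v = 0) : ∃ c : ℂ, ∀ v, φ v = c * a ⬝ᵥ v := by
  have hker : ⨅ _ : Unit, LinearMap.ker (dotProductEquiv ℂ (Fin ℓ) a) ≤ LinearMap.ker φ := by
    intro v hv
    simp only [iInf_const, LinearMap.mem_ker, dotProductEquiv_apply_apply] at hv
    exact hφ v hv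
  obtain ⟨c, hc⟩ := Submodule.mem_span_singleton.mp
    (by simpa using mem_span_of_iInf_ker_le_ker hker)
  exact ⟨c, fun v => by simp [← hc]⟩

section Fixing

variable {a : Fin ℓ → ℂ} {w : GLV ℓ}

lemma exists_dotProduct_apply_eq_mul (hw : ∀ v ∈ hypl a, w v = v) :
    ∃ c : ℂ, ∀ v, a ⬝ᵥ w v = c * a ⬝ᵥ v :=
  exists_eq_mul_dotProduct_of_hypl ((dotProductEquiv ℂ _ a).comp w.toLinearMap)
    fun v hv => by simpa [hw v hv] using mem_hypl.mp hv

lemma induced_lin_eq_C_mul {c : ℂ} (hc : ∀ v, a ⬝ᵥ w v = c * a ⬝ᵥ v) :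
    induced w (lin a) = C c * lin a :=
  MvPolynomial.funext fun v => by simp [eval_induced, eval_lin, hc]

lemma induced_X_sub_X_mem_span (hw : ∀ v ∈ hypl a, w v = v) (i : Fin ℓ) :
    induced w (X i) - X i ∈ Ideal.span {lin a} := by
  obtain ⟨c, hc⟩ := exists_eq_mul_dotProduct_of_hypl
    (LinearMap.proj i ∘ₗ (w.toLinearMap - LinearMap.id)) fun v hv => by simp [hw v hv]
  have : induced w (X i) - X i = C c * lin a :=
    MvPolynomial.funext fun v => by simpa [eval_induced, eval_lin] using hc v
  exact this ▸ Ideal.mul_mem_left _ _ (Ideal.mem_span_singleton_self _)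

lemma mk_induced (hw : ∀ v ∈ hypl a, w v = v) (p : Spoly ℓ) :
    Ideal.Quotient.mk (Ideal.span {lin a}) (induced w p) = Ideal.Quotient.mk _ p := by
  have : (Ideal.Quotient.mkₐ ℂ (Ideal.span {lin a})).comp (induced w) = Ideal.Quotient.mkₐ ℂ _ :=
    MvPolynomial.algHom_ext fun i =>
      Ideal.Quotient.eq.mpr (induced_X_sub_X_mem_span hw i)
  exact congr($this p)

/-- Such a `w` is unipotent, and a unipotent map of finite order is trivial in characteristic
zero. -/
lemma eq_one_of_dotProduct_apply_eq (hw : ∀ v ∈ hypl a, w v = v)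
    (ha : ∀ v, a ⬝ᵥ w v = a ⬝ᵥ v) {k : ℕ} (hk : 0 < k) (hwk : w ^ k = 1) : w = 1 := by
  have hfix : ∀ v, w (w v - v) = w v - v := fun v =>
    hw _ (mem_hypl.mpr (by simp [dotProduct_sub, ha]))
  have hpow : ∀ m : ℕ, ∀ v, (w ^ m) v = v + (m : ℂ) • (w v - v) := by
    intro m
    induction m with
    | zero => simp
    | succ m ih =>
      intro v
      have hD : w (w v) - w v = w v - v := by simpa using hfix v
      rw [pow_succ, LinearEquiv.mul_apply, ih, hD]
      push_cast
      module
  ext v : 1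
  have := hpow k v
  rw [hwk] at this
  have h0 : (k : ℂ) • (w v - v) = 0 := by simpa using this.symm
  simpa [sub_eq_zero, hk.ne'] using h0

end Fixing

section Stabilizer

variable (G : Subgroup (GLV ℓ)) (a : Fin ℓ → ℂ)

lemma hypOrder_eq_card_fixingSubgroup : hypOrder G a = Nat.card (fixingSubgroup G (hypl a)) := by
  unfold hypOrder
  congr
  ext w
  exact (mem_fixingSubgroup_iff G).symm

variable {G a}

lemma apply_eq_of_mem_fixingSubgroup {w : G} (hw : w ∈ fixingSubgroup G (hypl a)) :
    ∀ v ∈ hypl a, (w : GLV ℓ) v = v :=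
  (mem_fixingSubgroup_iff G).mp hw

lemma exists_injective_eigenvalue_hom [Finite G] (ha : a ≠ 0) :
    ∃ χ : fixingSubgroup G (hypl a) →* ℂ, Function.Injective χ ∧
      ∀ w : fixingSubgroup G (hypl a), ∀ v, a ⬝ᵥ ((w : G) : GLV ℓ) v = χ w * a ⬝ᵥ v := by
  choose c hc using fun w : fixingSubgroup G (hypl a) =>
    exists_dotProduct_apply_eq_mul (apply_eq_of_mem_fixingSubgroup w.2)
  obtain ⟨k, hk⟩ := Function.ne_iff.mp ha
  have huniq (w : fixingSubgroup G (hypl a)) (x : ℂ)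
      (h : ∀ v, a ⬝ᵥ ((w : G) : GLV ℓ) v = x * a ⬝ᵥ v) : c w = x :=
    mul_right_cancel₀ (by simpa using hk) ((hc w (Pi.single k 1)).symm.trans (h _))
  let χ : fixingSubgroup G (hypl a) →* ℂ :=
    { toFun := c
      map_one' := huniq 1 1 fun v => by simp
      map_mul' := fun x y => huniq _ _ fun v => by simp [LinearEquiv.mul_apply, hc, mul_assoc] }
  refine ⟨χ, (injective_iff_map_eq_one χ).mpr fun w hw => ?_, hc⟩
  have hpow : ((w : G) : GLV ℓ) ^ orderOf w = 1 := by
    simpa only [SubgroupClass.coe_pow, OneMemClass.coe_one] using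
      congrArg (fun u : fixingSubgroup G (hypl a) => ((u : G) : GLV ℓ)) (pow_orderOf_eq_one w)
  have hcw : c w = 1 := hw
  exact Subtype.ext <| Subtype.ext <| eq_one_of_dotProduct_apply_eq
    (apply_eq_of_mem_fixingSubgroup w.2) (by simpa [hcw] using hc w) (orderOf_pos w) hpow

lemma hypOrder_dvd_sub_of_pow_eq_pow [Finite G] (ha : a ≠ 0) {m k : ℕ}
    (h : ∀ w ∈ G, (∀ v ∈ hypl a, w v = v) →
      ∀ c : ℂ, induced w (lin a) = C c * lin a → c ^ m = c ^ k) :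
    (hypOrder G a : ℤ) ∣ k - m := by
  obtain ⟨χ, hχ, hχa⟩ := exists_injective_eigenvalue_hom (G := G) ha
  have := isCyclic_of_injective_ringHom χ hχ
  obtain ⟨w, hw⟩ := IsCyclic.exists_ofOrder_eq_natCard (α := fixingSubgroup G (hypl a))
  rw [hypOrder_eq_card_fixingSubgroup, ← hw, ← Nat.modEq_iff_dvd, ← pow_eq_pow_iff_modEq]
  refine hχ ?_
  simpa only [map_pow] using h _ (w : G).2 (apply_eq_of_mem_fixingSubgroup w.2) _
    (induced_lin_eq_C_mul (hχa w))

end Stabilizer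

lemma toF_injective : Function.Injective (toF : Spoly ℓ → Frac ℓ) :=
  IsFractionRing.injective _ _

lemma toF_ne_zero {p : Spoly ℓ} (hp : p ≠ 0) : toF p ≠ 0 :=
  (map_ne_zero_iff _ toF_injective).mpr hp

lemma smul_eq_toF_C_mul (c : ℂ) (z : Frac ℓ) : c • z = toF (C c) * z := by
  rw [Algebra.smul_def, toF, ← algebraMap_eq, ← IsScalarTower.algebraMap_apply]

/-- The fractional ideal `α^k S_⟨α⟩`; the second clause of `Dmult A ν` is
`θ (toF (lin a)) ∈ zpowLocAt (lin a) (ν a)`. -/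
def zpowLocAt (α : Spoly ℓ) (k : ℤ) : Set (Frac ℓ) :=
  {x | ∃ y ∈ locAt α, x = toF α ^ k * y}

section Localization

variable {α : Spoly ℓ} {x : Frac ℓ}

lemma toF_mul_mem_locAt (p : Spoly ℓ) {y : Frac ℓ} (hy : y ∈ locAt α) : toF p * y ∈ locAt α := by
  obtain ⟨f, g, hg, hgy⟩ := hy
  exact ⟨p * f, g, hg, by rw [map_mul, ← hgy]; ring⟩

lemma zero_mem_zpowLocAt (hα : Prime α) (k : ℤ) : 0 ∈ zpowLocAt α k :=
  ⟨0, ⟨0, 1, fun h => hα.not_dvd_one (Ideal.mem_span_singleton.mp h), by simp⟩, by simp⟩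

lemma zpowLocAt_mono (hα : α ≠ 0) {j k : ℤ} (hjk : j ≤ k) : zpowLocAt α k ⊆ zpowLocAt α j := by
  rintro x ⟨y, hy, rfl⟩
  refine ⟨toF α ^ (k - j) * y, ?_, ?_⟩
  · rw [← Int.toNat_of_nonneg (sub_nonneg.mpr hjk), zpow_natCast, ← map_pow]
    exact toF_mul_mem_locAt _ hy
  · rw [← mul_assoc, ← zpow_add₀ (toF_ne_zero hα), add_sub_cancel]

lemma mem_zpowLocAt_of_mul_eq {n : ℤ} {f g : Spoly ℓ} (hg : ¬ α ∣ g)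
    (h : toF g * x = toF α ^ n * toF f) : x ∈ zpowLocAt α n := by
  have hg0 : toF g ≠ 0 := toF_ne_zero (by rintro rfl; exact hg (dvd_zero α))
  refine ⟨toF f / toF g, ⟨f, g, fun h => hg (Ideal.mem_span_singleton.mp h), ?_⟩, ?_⟩
  · field_simp
  · rw [mul_div_assoc', eq_div_iff hg0, mul_comm, h]

lemma exists_mul_eq_of_mem_zpowLocAt (hα : Prime α) {k : ℤ} (hx : x ∈ zpowLocAt α k)
    (hx0 : x ≠ 0) : ∃ n ≥ k, ∃ f g : Spoly ℓ, ¬ α ∣ f ∧ ¬ α ∣ g ∧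
      toF g * x = toF α ^ n * toF f := by
  obtain ⟨y, ⟨f, g, hg, hgy⟩, rfl⟩ := hx
  have hf0 : f ≠ 0 := by
    rintro rfl
    have hg0 : toF g ≠ 0 := toF_ne_zero (by rintro rfl; exact hg (Ideal.zero_mem _))
    apply hx0
    rw [(mul_eq_zero.mp (hgy.trans (map_zero _))).resolve_left hg0, mul_zero]
  obtain ⟨m, f₁, hf₁, rfl⟩ := WfDvdMonoid.max_power_factor hf0 hα.irreducible
  refine ⟨k + m, by omega, f₁, g, hf₁, fun h => hg (Ideal.mem_span_singleton.mpr h), ?_⟩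
  rw [zpow_add₀ (toF_ne_zero hα.ne_zero), mul_left_comm, hgy,
    map_mul, map_pow, zpow_natCast]
  ring

end Localization

section Invariance

variable {G : Subgroup (GLV ℓ)} {θ : Derivation ℂ (Frac ℓ) (Frac ℓ)} {a : Fin ℓ → ℂ}
  {w : GLV ℓ} {c : ℂ}

lemma C_mul_mul_induced_eq (hθ : Winvariant G θ) (hw : w ∈ G)
    (hc : induced w (lin a) = C c * lin a) {F g : Spoly ℓ} (hg : g ≠ 0)
    (h : toF g * θ (toF (lin a)) = toF F) :
    C c * F * induced w g = g * induced w F := by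
  have hθw := hθ w hw _ F g hg h
  rw [hc, map_mul, ← smul_eq_toF_C_mul, θ.map_smul, smul_eq_toF_C_mul] at hθw
  apply toF_injective
  simp only [map_mul]
  linear_combination toF g * hθw - toF (C c) * toF (induced w g) * h

lemma eq_of_C_mul_mul_induced_eq (ha : a ≠ 0) (hw : ∀ v ∈ hypl a, w v = v) {f g : Spoly ℓ}
    (hf : ¬ lin a ∣ f) (hg : ¬ lin a ∣ g) {x y : ℂ}
    (h : C x * f * induced w g = C y * g * induced w f) : x = y := by
  have : (Ideal.span {lin a}).IsPrime :=
    (Ideal.span_singleton_prime (lin_ne_zero ha)).mpr (prime_lin ha)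
  have hmk (p : Spoly ℓ) : Ideal.Quotient.mk (Ideal.span {lin a}) p = 0 ↔ lin a ∣ p := by
    rw [Ideal.Quotient.eq_zero_iff_mem, Ideal.mem_span_singleton]
  have hmod := congrArg (Ideal.Quotient.mk (Ideal.span {lin a})) h
  simp only [map_mul, mk_induced hw] at hmod
  have hxy : Ideal.Quotient.mk (Ideal.span {lin a}) (C (x - y)) *
      (Ideal.Quotient.mk _ f * Ideal.Quotient.mk _ g) = 0 := by
    rw [map_sub, map_sub]
    linear_combination hmod
  by_contra hne
  simp only [mul_eq_zero, hmk, hf, hg, or_false] at hxy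
  exact (prime_lin ha).not_isUnit
    (isUnit_of_dvd_unit hxy ((isUnit_iff_ne_zero.mpr (sub_ne_zero.mpr hne)).map C))

lemma pow_succ_eq_pow_of_winvariant (ha : a ≠ 0) (hθ : Winvariant G θ) (hw : w ∈ G)
    (hfix : ∀ v ∈ hypl a, w v = v) (hc : induced w (lin a) = C c * lin a) {f g : Spoly ℓ}
    (hf : ¬ lin a ∣ f) (hg : ¬ lin a ∣ g) {r s : ℕ}
    (h : toF (lin a ^ s * g) * θ (toF (lin a)) = toF (lin a ^ r * f)) :
    c ^ (s + 1) = c ^ r := by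
  have hg0 : lin a ^ s * g ≠ 0 :=
    mul_ne_zero (pow_ne_zero _ (lin_ne_zero ha)) (by rintro rfl; exact hg (dvd_zero _))
  have hrel := C_mul_mul_induced_eq hθ hw hc hg0 h
  simp only [map_mul, map_pow, hc] at hrel
  refine eq_of_C_mul_mul_induced_eq ha hfix hf hg
    (mul_left_cancel₀ (pow_ne_zero (r + s) (lin_ne_zero ha)) ?_)
  simp only [map_pow]
  linear_combination hrel

theorem hypOrder_dvd_sub_one_of_winvariant [Finite G] (ha : a ≠ 0) (hθ : Winvariant G θ)
    {f g : Spoly ℓ} (hf : ¬ lin a ∣ f) (hg : ¬ lin a ∣ g) {n : ℤ}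
    (h : toF g * θ (toF (lin a)) = toF (lin a) ^ n * toF f) :
    (hypOrder G a : ℤ) ∣ n - 1 := by
  have h' : toF (lin a ^ (-n).toNat * g) * θ (toF (lin a)) = toF (lin a ^ n.toNat * f) := by
    rw [map_mul, map_mul, map_pow, map_pow, mul_assoc, h, ← mul_assoc, ← zpow_natCast,
      ← zpow_natCast, ← zpow_add₀ (toF_ne_zero (lin_ne_zero ha))]
    congr 3
    omega
  have := hypOrder_dvd_sub_of_pow_eq_pow (G := G) ha fun w hw hfix c hc =>
    pow_succ_eq_pow_of_winvariant ha hθ hw hfix hc hf hg h'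
  convert this using 1
  omega

end Invariance

lemma le_of_dvd_sub_of_sub_lt {e m n : ℤ} (hd : e ∣ n - m) (h : m - e < n) : m ≤ n := by
  obtain ⟨t, ht⟩ := hd
  by_contra! hnm
  have he : 0 < e := by omega
  have ht0 : t ≤ -1 := by
    by_contra! ht0
    nlinarith
  nlinarith

theorem mem_zpowLocAt_of_winvariant {G : Subgroup (GLV ℓ)} [Finite G]
    {θ : Derivation ℂ (Frac ℓ) (Frac ℓ)} {a : Fin ℓ → ℂ} (ha : a ≠ 0) (hθ : Winvariant G θ)
    {ν μ : ℤ} (hμ : (hypOrder G a : ℤ) ∣ μ - 1) (hlt : μ - hypOrder G a < ν)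
    (h : θ (toF (lin a)) ∈ zpowLocAt (lin a) ν) : θ (toF (lin a)) ∈ zpowLocAt (lin a) μ := by
  by_cases h0 : θ (toF (lin a)) = 0
  · exact h0 ▸ zero_mem_zpowLocAt (prime_lin ha) μ
  obtain ⟨n, hνn, f, g, hf, hg, hfg⟩ := exists_mul_eq_of_mem_zpowLocAt (prime_lin ha) h h0
  have hμn : μ ≤ n := le_of_dvd_sub_of_sub_lt
    (by simpa using dvd_sub (hypOrder_dvd_sub_one_of_winvariant ha hθ hf hg hfg) hμ) (by omega)
  exact zpowLocAt_mono (lin_ne_zero ha) hμn (mem_zpowLocAt_of_mul_eq hg hfg)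

end

theorem invariant_parts_eq_general_general {ℓ : ℕ} (G : Subgroup (GLV ℓ)) [Finite G]
    (A : Finset (Fin ℓ → ℂ)) (hGA : IsReflArrOf G A)
    (ν μ : (Fin ℓ → ℂ) → ℤ) (aH : (Fin ℓ → ℂ) → ℤ)
    (hμ : ∀ a ∈ A, μ a = aH a * (hypOrder G a : ℤ) + 1)
    (hlt : ∀ a ∈ A, μ a - (hypOrder G a : ℤ) < ν a)
    (hle : ∀ a ∈ A, ν a ≤ μ a) :
    {θ : Derivation ℂ (Frac ℓ) (Frac ℓ) | Dmult A ν θ ∧ Winvariant G θ} =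
      {θ | Dmult A μ θ ∧ Winvariant G θ} := by
  have ha : ∀ a ∈ A, a ≠ 0 := hGA.1.1
  ext θ
  constructor
  · rintro ⟨⟨hinf, hν⟩, hθ⟩
    exact ⟨⟨hinf, fun a haA => mem_zpowLocAt_of_winvariant (ha a haA) hθ
      ⟨aH a, by rw [hμ a haA]; ring⟩ (hlt a haA) (hν a haA)⟩, hθ⟩
  · rintro ⟨⟨hinf, hμθ⟩, hθ⟩
    exact ⟨⟨hinf, fun a haA => zpowLocAt_mono (lin_ne_zero (ha a haA)) (hle a haA) (hμθ a haA)⟩,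
      hθ⟩

/-- Let `ν` be any ℤ-valued multiplicity on the reflection arrangement `𝒜(W)` of a
well-generated irreducible unitary reflection group. For each `H` choose `a_H ∈ ℤ`
and set `μ(H) = a_H·e_H + 1`; if `μ − ω < ν ≤ μ` pointwise, then
`D(𝒜, ν)^W = D(𝒜, μ)^W`. -/
theorem invariant_parts_eq_general {ℓ : ℕ} (hℓ : 0 < ℓ) (G : Subgroup (GLV ℓ)) [Finite G]
    (A : Finset (Fin ℓ → ℂ)) (hGA : IsReflArrOf G A)
    (hwg : WellGen G) (hirr : IsIrred G)
    (ν μ : (Fin ℓ → ℂ) → ℤ) (aH : (Fin ℓ → ℂ) → ℤ)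
    (hμ : ∀ a ∈ A, μ a = aH a * (hypOrder G a : ℤ) + 1)
    (hlt : ∀ a ∈ A, μ a - (hypOrder G a : ℤ) < ν a)
    (hle : ∀ a ∈ A, ν a ≤ μ a) :
    {θ : Derivation ℂ (Frac ℓ) (Frac ℓ) | Dmult A ν θ ∧ Winvariant G θ} =
      {θ | Dmult A μ θ ∧ Winvariant G θ} :=
  invariant_parts_eq_general_general G A hGA ν μ aH hμ hlt hle
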